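/- Let X be any k-dimensional simplicial complex on a finite vertex set V, let V = A_0 ⊔ … ⊔ A_k be a partition into nonempty parts, and let f ∈ C^{k−1}(X;ℝ) be the associated cochain (with the partition-adapted linear order on V). Then for every k-face τ ∈ X_k: (δ_{k−1}f)(τ) = |V| if τ ∈ F(A_0,…,A_k), and (δ_{k−1}f)(τ) = 0 otherwise. -/

import Mathlib

open Finset

namespace HigherCheeger

variable {V : Type*} [DecidableEq V] [Fintype V] [LinearOrder V]

/-- An abstract simplicial complex: a family of finite subsets of `V`
closed under taking subsets. -/
def IsComplex (X : Finset (Finset V)) : Prop :=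
  ∀ σ ∈ X, ∀ τ ⊆ σ, τ ∈ X

/-- `X` is `k`-dimensional: every face has at most `k+1` vertices
and some face has exactly `k+1` vertices. -/
def IsDim (X : Finset (Finset V)) (k : ℕ) : Prop :=
  (∀ σ ∈ X, σ.card ≤ k + 1) ∧ ∃ σ ∈ X, σ.card = k + 1

/-- The faces of `X` of cardinality `c` (i.e. of dimension `c - 1`). -/
def faces (X : Finset (Finset V)) (c : ℕ) : Finset (Finset V) :=
  X.filter fun σ => σ.card = c

/-- `X` has complete `(k-1)`-skeleton: every subset of `V` of size at most `k` is a face. -/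
def CompleteSkeleton (X : Finset (Finset V)) (k : ℕ) : Prop :=
  ∀ σ : Finset V, σ.card ≤ k → σ ∈ X

/-- The `k`-dimensional completion `K(X)`. -/
def completion (X : Finset (Finset V)) (k : ℕ) : Finset (Finset V) :=
  X ∪ (Finset.univ.filter fun τ : Finset V => τ.card = k + 1 ∧ ∀ v ∈ τ, τ.erase v ∈ X)

/-- The complete `k`-dimensional complex `K_n^k` on the vertex set `V`. -/
def completeComplex (V : Type*) [DecidableEq V] [Fintype V] (k : ℕ) : Finset (Finset V) :=
  Finset.univ.filter fun σ : Finset V => σ.card ≤ k + 1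

/-- The oriented incidence number `[τ:σ]` (with respect to the linear order on `V`):
`(-1)^j` if `σ = τ \ {v_j}` where `v_j` is the `j`-th smallest vertex of `τ`, and `0` otherwise. -/
def incidence (τ σ : Finset V) : ℝ :=
  if σ ⊆ τ ∧ σ.card + 1 = τ.card then
    ∑ v ∈ τ \ σ, (-1 : ℝ) ^ (τ.filter fun w => w < v).card
  else 0

/-- The real coboundary operator `δ` applied to a cochain living on the faces of
cardinality `c`; the result lives on faces of cardinality `c + 1`. -/
def delta (X : Finset (Finset V)) (c : ℕ) (f : Finset V → ℝ) : Finset V → ℝ :=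
  fun τ => ∑ σ ∈ faces X c, incidence τ σ * f σ

/-- The real boundary operator `∂` (the adjoint of `δ`) applied to a cochain living
on the faces of cardinality `c`; the result lives on faces of cardinality `c - 1`. -/
def bdry (X : Finset (Finset V)) (c : ℕ) (f : Finset V → ℝ) : Finset V → ℝ :=
  fun σ => ∑ τ ∈ faces X c, incidence τ σ * f τ

/-- The inner product of two cochains on the faces of cardinality `c`. -/
def inn (X : Finset (Finset V)) (c : ℕ) (f g : Finset V → ℝ) : ℝ :=
  ∑ σ ∈ faces X c, f σ * g σ

/-- The upper Laplacian `L^up_{k-1} = ∂_k δ_{k-1}` acting on `(k-1)`-cochains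
(functions on faces of cardinality `k`). -/
def lapUp (X : Finset (Finset V)) (k : ℕ) (f : Finset V → ℝ) : Finset V → ℝ :=
  bdry X (k + 1) (delta X k f)

/-- The lower Laplacian `L^down_{k-1} = δ_{k-2} ∂_{k-1}` acting on `(k-1)`-cochains. -/
def lapDown (X : Finset (Finset V)) (k : ℕ) (f : Finset V → ℝ) : Finset V → ℝ :=
  delta X (k - 1) (bdry X k f)

/-- `f ∈ Z_{k-1}(X;ℝ) = ker ∂_{k-1}`. -/
def IsCycle (X : Finset (Finset V)) (k : ℕ) (f : Finset V → ℝ) : Prop :=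
  ∀ σ : Finset V, bdry X k f σ = 0

/-- `f ∈ B^{k-1}(X;ℝ) = im δ_{k-2}` (as a cochain, i.e. on the `(k-1)`-faces). -/
def IsCobdry (X : Finset (Finset V)) (k : ℕ) (f : Finset V → ℝ) : Prop :=
  ∃ g : Finset V → ℝ, ∀ σ ∈ faces X k, f σ = delta X (k - 1) g σ

/-- The spectral gap `λ(X)`: the minimum of the Rayleigh quotient
`⟨L^up_{k-1}(X) f, f⟩ / ⟨f, f⟩` over nonzero `f ∈ Z_{k-1}(X;ℝ)`. -/
noncomputable def spectralGap (X : Finset (Finset V)) (k : ℕ) : ℝ :=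
  sInf {r : ℝ | ∃ f : Finset V → ℝ, IsCycle X k f ∧ inn X k f f ≠ 0 ∧
    r = inn X k (lapUp X k f) f / inn X k f f}

/-- A partition of `V` into `m` (nonempty) parts. -/
def IsPartition {m : ℕ} (A : Fin m → Finset V) : Prop :=
  (∀ i, (A i).Nonempty) ∧ ∀ v : V, ∃! i, v ∈ A i

/-- The linear order on `V` is adapted to the family of parts `A`. -/
def OrderAdapted {m : ℕ} (A : Fin m → Finset V) : Prop :=
  ∀ i j : Fin m, i < j → ∀ v ∈ A i, ∀ w ∈ A j, v < w

/-- `F(A_0,…,A_k)`: the `k`-faces of `X` with exactly one vertex in each part. -/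
def Fset (X : Finset (Finset V)) (k : ℕ) (A : Fin (k + 1) → Finset V) : Finset (Finset V) :=
  (faces X (k + 1)).filter fun τ => ∀ i, (τ ∩ A i).card = 1

/-- `F^∂(A_0,…,A_k)`: the `(k+1)`-element members of `K(X)` with exactly one vertex
in each part. -/
def Fpar (X : Finset (Finset V)) (k : ℕ) (A : Fin (k + 1) → Finset V) : Finset (Finset V) :=
  (faces (completion X k) (k + 1)).filter fun τ => ∀ i, (τ ∩ A i).card = 1

/-- The value `|V|·|F(A_0,…,A_k)| / |F^∂(A_0,…,A_k)|` of a partition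
(`⊤` if the denominator is `0`). -/
noncomputable def cheegerVal (X : Finset (Finset V)) (k : ℕ) (A : Fin (k + 1) → Finset V) :
    EReal :=
  if (Fpar X k A).card = 0 then ⊤
  else (((Fintype.card V * (Fset X k A).card : ℝ) / ((Fpar X k A).card : ℝ) : ℝ) : EReal)

/-- The Cheeger constant `h(X)`. -/
noncomputable def cheeger (X : Finset (Finset V)) (k : ℕ) : EReal :=
  sInf {r : EReal | ∃ A : Fin (k + 1) → Finset V, IsPartition A ∧ r = cheegerVal X k A}

/-- `d(σ)`: the number of members of `F^∂(A_0,…,A_k)` containing `σ`. -/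
def degPar (X : Finset (Finset V)) (k : ℕ) (A : Fin (k + 1) → Finset V) (σ : Finset V) : ℕ :=
  ((Fpar X k A).filter fun τ => σ ⊆ τ).card

/-- `C(X)` (with respect to the partition `A`):
the maximum over `τ ∈ F^∂(A_0,…,A_k)` of `∑_{v ∈ τ} d(τ \ {v})`. -/
def Cconst (X : Finset (Finset V)) (k : ℕ) (A : Fin (k + 1) → Finset V) : ℕ :=
  (Fpar X k A).sup fun τ => ∑ v ∈ τ, degPar X k A (τ.erase v)

/-- The cochain associated to a partition `A`: `σ ↦ (-1)^l·|A_l|` if `A_l` is the unique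
part disjoint from `σ`, and `0` otherwise. -/
def assocCochain {k : ℕ} (A : Fin (k + 1) → Finset V) (σ : Finset V) : ℝ :=
  if (Finset.univ.filter fun l => σ ∩ A l = ∅).card = 1 then
    ∑ l ∈ Finset.univ.filter fun l => σ ∩ A l = ∅, (-1 : ℝ) ^ (l : ℕ) * ((A l).card : ℝ)
  else 0

/-- The `Z₂`-coboundary: a `(c-1)`-cochain `f` is sent to
`τ ↦ ∑_{v ∈ τ} f (τ \ {v})`. -/
def deltaZ2 (f : Finset V → ZMod 2) (τ : Finset V) : ZMod 2 :=
  ∑ v ∈ τ, f (τ.erase v)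

/-- The support of the `Z₂`-coboundary of `f` in `X`: the faces of `X` of cardinality
`k + 1` on which the `Z₂`-coboundary of `f` is nonzero.  Its cardinality is `|δ_X f|`. -/
def suppDelta (X : Finset (Finset V)) (k : ℕ) (f : Finset V → ZMod 2) : Finset (Finset V) :=
  (faces X (k + 1)).filter fun τ => deltaZ2 f τ ≠ 0

/-- `F(A_0,…,A_{k-1})`: the `(k-1)`-faces of `X` with exactly one vertex in each of
the `k` parts. -/
def FsetLow (X : Finset (Finset V)) (k : ℕ) (A : Fin k → Finset V) : Finset (Finset V) :=
  (faces X k).filter fun σ => ∀ i, (σ ∩ A i).card = 1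

/-- The Cheeger-type constant `h'(X)`. -/
noncomputable def cheeger' (X : Finset (Finset V)) (k : ℕ) : EReal :=
  sInf {r : EReal | ∃ (A : Fin k → Finset V) (f : Finset V → ZMod 2),
    IsPartition A ∧ (∀ σ, f σ ≠ 0 → σ ∈ FsetLow X k A) ∧
    r = if (suppDelta (completion X k) k f).card = 0 then (⊤ : EReal)
        else (((Fintype.card V * (suppDelta X k f).card : ℝ) /
              ((suppDelta (completion X k) k f).card : ℝ) : ℝ) : EReal)}

/-- The Hamming norm of a `Z₂`-cochain on the faces of cardinality `c`. -/
def hamming (X : Finset (Finset V)) (c : ℕ) (f : Finset V → ZMod 2) : ℕ :=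
  ((faces X c).filter fun σ => f σ ≠ 0).card

/-- `|[f]|`: the minimum Hamming norm of `f + δ_X g` over `g ∈ C^{k-2}(X;Z₂)`. -/
noncomputable def normClass (X : Finset (Finset V)) (k : ℕ) (f : Finset V → ZMod 2) : ℕ :=
  sInf {m : ℕ | ∃ g : Finset V → ZMod 2, m = hamming X k fun σ => f σ + deltaZ2 g σ}

/-- The coboundary expansion `φ(X) = min_f |δ_X f| / |[f]|` (quotients with denominator
`0` are `∞`). -/
noncomputable def phi (X : Finset (Finset V)) (k : ℕ) : EReal :=
  sInf {r : EReal | ∃ f : Finset V → ZMod 2,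
    r = if normClass X k f = 0 then (⊤ : EReal)
        else ((((suppDelta X k f).card : ℝ) / (normClass X k f : ℝ) : ℝ) : EReal)}

/-- `h̃(X) = min_f |V|·|δ_X f| / |δ_{K(X)} f|` (quotients with denominator `0` are `∞`). -/
noncomputable def htilde (X : Finset (Finset V)) (k : ℕ) : EReal :=
  sInf {r : EReal | ∃ f : Finset V → ZMod 2,
    r = if (suppDelta (completion X k) k f).card = 0 then (⊤ : EReal)
        else (((Fintype.card V * (suppDelta X k f).card : ℝ) /
              ((suppDelta (completion X k) k f).card : ℝ) : ℝ) : EReal)}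


/-!
Expand `δf(τ)` along the `k + 1` vertices of `τ`: the term of `v` is `±f(τ ∖ v)`, and it vanishes
unless `τ ∖ v` misses exactly one part. If `τ` meets every part once, the vertex `v ∈ A_i` is the
`i`-th vertex of `τ` in the adapted order and `τ ∖ v` misses exactly `A_i`, so its term is
`(-1)^i · (-1)^i |A_i| = |A_i|`, and the terms add up to `|V|`. Otherwise, since `τ` has as many
vertices as there are parts, either `τ` misses two parts and every term vanishes, or `τ` misses
exactly one part and meets one part `A_p` in two vertices `u < u'` and every other part once. Then
only `u` and `u'` contribute, with the same value of `f`; since the parts are intervals of the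
order, `u` and `u'` are consecutive in `τ`, so their signs are opposite.
-/

section Counting

variable {ι : Type*} {s : Finset ι} {n : ι → ℕ}

theorem eq_one_of_sum_eq_card (h₀ : ∀ i ∈ s, n i ≠ 0) (h : ∑ i ∈ s, n i = #s) :
    ∀ i ∈ s, n i = 1 := by
  have hle : ∀ i ∈ s, 1 ≤ n i := fun i hi => Nat.one_le_iff_ne_zero.2 (h₀ i hi)
  refine fun i hi => ((sum_eq_sum_iff_of_le hle).1 ?_ i hi).symm
  simpa using h.symm

theorem exists_eq_two_of_sum_eq_card_add_one [DecidableEq ι] (h₀ : ∀ i ∈ s, n i ≠ 0)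
    (h : ∑ i ∈ s, n i = #s + 1) : ∃ j ∈ s, n j = 2 ∧ ∀ i ∈ s, i ≠ j → n i = 1 := by
  obtain ⟨j, hj, hj2⟩ : ∃ j ∈ s, 2 ≤ n j := by
    by_contra! hlt
    have : ∑ i ∈ s, n i ≤ #s := by
      simpa using sum_le_card_nsmul s n 1 fun i hi => Nat.lt_succ_iff.1 (hlt i hi)
    omega
  have h₀' : ∀ i ∈ s.erase j, n i ≠ 0 := fun i hi => h₀ i (mem_of_mem_erase hi)
  have hge : #(s.erase j) ≤ ∑ i ∈ s.erase j, n i := by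
    simpa using card_nsmul_le_sum _ n 1 fun i hi => Nat.one_le_iff_ne_zero.2 (h₀' i hi)
  have hsplit := sum_erase_add s n hj
  have hcard := card_erase_add_one hj
  refine ⟨j, hj, by omega, fun i hi hij => ?_⟩
  exact eq_one_of_sum_eq_card h₀' (by omega) i (mem_erase.2 ⟨hij, hi⟩)

theorem card_filter_lt_eq_succ_of_consecutive {α : Type*} [LinearOrder α] {τ : Finset α}
    {u u' : α} (hu : u ∈ τ) (huu' : u < u') (hbetween : ∀ w ∈ τ, u < w → w < u' → False) :
    #(τ.filter (· < u')) = #(τ.filter (· < u)) + 1 := by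
  have h : τ.filter (· < u') = insert u (τ.filter (· < u)) := by
    ext w
    simp only [mem_filter, mem_insert]
    constructor
    · rintro ⟨hw, hwu'⟩
      rcases lt_trichotomy w u with hlt | rfl | hgt
      · exact Or.inr ⟨hw, hlt⟩
      · exact Or.inl rfl
      · exact (hbetween w hw hgt hwu').elim
    · rintro (rfl | ⟨hw, hwu⟩)
      · exact ⟨hu, huu'⟩
      · exact ⟨hw, hwu.trans huu'⟩
  rw [h, card_insert_of_notMem fun h => (mem_filter.1 h).2.false]

end Counting

namespace IsPartition

variable {V : Type*} {m : ℕ} {A : Fin m → Finset V}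

noncomputable def part (hA : IsPartition A) (v : V) : Fin m :=
  (hA.2 v).choose

theorem mem_part (hA : IsPartition A) (v : V) : v ∈ A (hA.part v) :=
  (hA.2 v).choose_spec.1

theorem part_eq_of_mem (hA : IsPartition A) {v : V} {i : Fin m} (h : v ∈ A i) :
    hA.part v = i :=
  ((hA.2 v).choose_spec.2 i h).symm

theorem sum_comp_part [DecidableEq V] {M : Type*} [AddCommMonoid M] (hA : IsPartition A)
    (s : Finset V) (g : Fin m → M) : ∑ v ∈ s, g (hA.part v) = ∑ l, #(s ∩ A l) • g l := by
  rw [← sum_fiberwise_of_maps_to (t := univ) (g := hA.part) fun v _ => mem_univ _]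
  refine sum_congr rfl fun l _ => ?_
  have hfiber : s.filter (fun v => hA.part v = l) = s ∩ A l := by
    ext v
    simp only [mem_filter, mem_inter]
    exact and_congr_right fun _ => ⟨fun h => h ▸ hA.mem_part v, hA.part_eq_of_mem⟩
  rw [sum_congr rfl fun v hv => by rw [(mem_filter.1 hv).2], sum_const, hfiber]

theorem sum_card_inter [DecidableEq V] (hA : IsPartition A) (s : Finset V) :
    ∑ l, #(s ∩ A l) = #s := by
  have h := hA.sum_comp_part s fun _ => (1 : ℕ)
  simp only [smul_eq_mul, mul_one] at h
  rw [← h, card_eq_sum_ones]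

theorem part_mono [LinearOrder V] (hA : IsPartition A) (hord : OrderAdapted A) :
    Monotone hA.part := by
  intro v w hvw
  by_contra! hlt
  exact (hord _ _ hlt w (hA.mem_part w) v (hA.mem_part v)).not_ge hvw

theorem mem_of_le_of_le [LinearOrder V] (hA : IsPartition A) (hord : OrderAdapted A)
    {u w u' : V} {p : Fin m} (hu : u ∈ A p) (hu' : u' ∈ A p) (h₁ : u ≤ w) (h₂ : w ≤ u') :
    w ∈ A p := by
  have hw : hA.part w = p := le_antisymm
    (hA.part_eq_of_mem hu' ▸ hA.part_mono hord h₂) (hA.part_eq_of_mem hu ▸ hA.part_mono hord h₁)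
  exact hw ▸ hA.mem_part w

theorem erase_inter_eq_empty_iff [DecidableEq V] (hA : IsPartition A) {τ : Finset V} {v : V}
    (hv : v ∈ τ) (l : Fin m) :
    τ.erase v ∩ A l = ∅ ↔ τ ∩ A l = ∅ ∨ (l = hA.part v ∧ #(τ ∩ A l) = 1) := by
  rw [erase_inter, erase_eq_empty_iff]
  refine or_congr_right ⟨fun h => ?_, fun ⟨hl, hcard⟩ => ?_⟩
  · have hvl : v ∈ A l := (mem_inter.1 (h ▸ mem_singleton_self v)).2
    exact ⟨(hA.part_eq_of_mem hvl).symm, by rw [h, card_singleton]⟩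
  · obtain ⟨w, hw⟩ := card_eq_one.1 hcard
    have hvw : v ∈ τ ∩ A l := mem_inter.2 ⟨hv, hl ▸ hA.mem_part v⟩
    rw [hw] at hvw ⊢
    rw [mem_singleton.1 hvw]

theorem card_filter_lt_eq_part [DecidableEq V] [LinearOrder V] (hA : IsPartition A)
    (hord : OrderAdapted A) {τ : Finset V} (h : ∀ i, #(τ ∩ A i) = 1) {v : V} (hv : v ∈ τ) :
    #(τ.filter (· < v)) = hA.part v := by
  have hsingle : τ ∩ A (hA.part v) = {v} :=
    eq_singleton_iff_unique_mem.2 ⟨mem_inter.2 ⟨hv, hA.mem_part v⟩,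
      fun w hw => card_le_one.1 (h _).le w hw v (mem_inter.2 ⟨hv, hA.mem_part v⟩)⟩
  have hfilter : τ.filter (· < v) = τ.filter fun w => hA.part w < hA.part v := by
    refine filter_congr fun w hw => ⟨fun hwv => ?_, (hA.part_mono hord).reflect_lt⟩
    refine (hA.part_mono hord hwv.le).lt_of_ne fun heq => hwv.ne ?_
    exact mem_singleton.1 (hsingle ▸ mem_inter.2 ⟨hw, heq ▸ hA.mem_part w⟩)
  calc #(τ.filter (· < v))
      = ∑ w ∈ τ, if hA.part w < hA.part v then 1 else 0 := by rw [hfilter, card_filter]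
    _ = ∑ l, #(τ ∩ A l) • if l < hA.part v then 1 else 0 :=
      hA.sum_comp_part τ fun l => if l < hA.part v then 1 else 0
    _ = #(univ.filter (· < hA.part v)) := by simp [h]
    _ = hA.part v := by rw [filter_gt_eq_Iio, Fin.card_Iio]

theorem card_filter_lt_eq_succ_of_inter_eq_pair [DecidableEq V] [LinearOrder V]
    (hA : IsPartition A) (hord : OrderAdapted A) {τ : Finset V} {p : Fin m} {u u' : V}
    (hu : u < u') (hp : τ ∩ A p = {u, u'}) :
    #(τ.filter (· < u')) = #(τ.filter (· < u)) + 1 := by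
  have huτ : u ∈ τ ∩ A p := hp ▸ mem_insert_self u {u'}
  have hu'τ : u' ∈ τ ∩ A p := hp ▸ mem_insert_of_mem (mem_singleton_self u')
  refine card_filter_lt_eq_succ_of_consecutive (mem_inter.1 huτ).1 hu fun w hw huw hwu' => ?_
  have hwτ : w ∈ τ ∩ A p := mem_inter.2 ⟨hw,
    hA.mem_of_le_of_le hord (mem_inter.1 huτ).2 (mem_inter.1 hu'τ).2 huw.le hwu'.le⟩
  rw [hp, mem_insert, mem_singleton] at hwτ
  rcases hwτ with rfl | rfl
  exacts [huw.false, hwu'.false]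

theorem exists_two_missing_or_missing_doubled [DecidableEq V] [LinearOrder V] {k : ℕ}
    {A : Fin (k + 1) → Finset V} (hA : IsPartition A) {τ : Finset V} (hτ : #τ = k + 1)
    (hnot : ¬ ∀ i, #(τ ∩ A i) = 1) :
    (∃ i j, i ≠ j ∧ τ ∩ A i = ∅ ∧ τ ∩ A j = ∅) ∨
      ∃ i p u u', u < u' ∧ τ ∩ A i = ∅ ∧ τ ∩ A p = {u, u'} ∧
        ∀ l, l ≠ i → l ≠ p → #(τ ∩ A l) = 1 := by
  have hsum : ∑ l, #(τ ∩ A l) = #(univ : Finset (Fin (k + 1))) := by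
    rw [hA.sum_card_inter, hτ, card_univ, Fintype.card_fin]
  obtain ⟨i, hi⟩ : ∃ i, τ ∩ A i = ∅ := by
    by_contra! hne
    exact hnot fun l => eq_one_of_sum_eq_card (fun l _ => card_ne_zero.2 (hne l)) hsum l (mem_univ l)
  obtain ⟨j, hji, hj⟩ | hone := em (∃ j, j ≠ i ∧ τ ∩ A j = ∅)
  · exact Or.inl ⟨i, j, hji.symm, hi, hj⟩
  push Not at hone
  have hsum' : ∑ l ∈ univ.erase i, #(τ ∩ A l) = #(univ.erase i) + 1 := by
    have hsplit := sum_erase_add univ (fun l => #(τ ∩ A l)) (mem_univ i)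
    have hcard := card_erase_add_one (mem_univ i)
    simp only [hi, card_empty, add_zero] at hsplit
    omega
  obtain ⟨p, hp, hp2, hrest⟩ := exists_eq_two_of_sum_eq_card_add_one
    (fun l hl => card_ne_zero.2 (hone l (ne_of_mem_erase hl))) hsum'
  have hrest' : ∀ l, l ≠ i → l ≠ p → #(τ ∩ A l) = 1 :=
    fun l hli hlp => hrest l (mem_erase.2 ⟨hli, mem_univ l⟩) hlp
  obtain ⟨u, u', hne, huu'⟩ := card_eq_two.1 hp2
  rcases hne.lt_or_gt with h | h
  · exact Or.inr ⟨i, p, u, u', h, hi, huu', hrest'⟩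
  · exact Or.inr ⟨i, p, u', u, h, hi, pair_comm u u' ▸ huu', hrest'⟩

end IsPartition

section Cochain

variable {V : Type*} [DecidableEq V] [LinearOrder V]

/-- The coboundary of `f` at `τ` computed in the full simplex on `V`. -/
def simplexDelta (f : Finset V → ℝ) (τ : Finset V) : ℝ :=
  ∑ v ∈ τ, (-1) ^ #(τ.filter (· < v)) * f (τ.erase v)

theorem incidence_erase {τ : Finset V} {v : V} (hv : v ∈ τ) :
    incidence τ (τ.erase v) = (-1) ^ #(τ.filter (· < v)) := by
  rw [incidence, if_pos ⟨erase_subset v τ, card_erase_add_one hv⟩, sdiff_erase_self hv,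
    sum_singleton]

theorem delta_eq_simplexDelta {X : Finset (Finset V)} {c : ℕ} (hX : IsComplex X)
    {τ : Finset V} (hτ : τ ∈ faces X (c + 1)) (f : Finset V → ℝ) :
    delta X c f τ = simplexDelta f τ := by
  obtain ⟨hτX, hcard⟩ := mem_filter.1 hτ
  have himage : τ.image τ.erase ⊆ faces X c := by
    intro σ hσ
    obtain ⟨v, hv, rfl⟩ := mem_image.1 hσ
    refine mem_filter.2 ⟨hX τ hτX _ (erase_subset v τ), ?_⟩
    have := card_erase_add_one hv
    omega
  rw [delta, ← sum_subset himage, sum_image (erase_injOn τ)]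
  · exact sum_congr rfl fun v hv => by rw [incidence_erase hv]
  · intro σ _ hσ
    rw [incidence, if_neg, zero_mul]
    rintro ⟨hsub, hcard⟩
    obtain ⟨a, ha, rfl⟩ := exists_eq_insert_iff.2 ⟨hsub, hcard⟩
    exact hσ (mem_image.2 ⟨a, mem_insert_self a σ, erase_insert ha⟩)

end Cochain

section AssocCochain

variable {V : Type*} [DecidableEq V] {k : ℕ} {A : Fin (k + 1) → Finset V}

theorem assocCochain_eq_of_forall_inter_eq_empty_iff {σ : Finset V} {i : Fin (k + 1)}
    (h : ∀ l, σ ∩ A l = ∅ ↔ l = i) : assocCochain A σ = (-1) ^ (i : ℕ) * #(A i) := by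
  have hmissing : univ.filter (fun l => σ ∩ A l = ∅) = {i} := by
    ext l
    simp [h]
  simp [assocCochain, hmissing]

theorem assocCochain_eq_zero_of_inter_eq_empty {σ : Finset V} {i j : Fin (k + 1)} (hij : i ≠ j)
    (hi : σ ∩ A i = ∅) (hj : σ ∩ A j = ∅) : assocCochain A σ = 0 := by
  have h : 1 < #(univ.filter fun l => σ ∩ A l = ∅) :=
    one_lt_card.2 ⟨i, by simp [hi], j, by simp [hj], hij⟩
  rw [assocCochain, if_neg h.ne']

variable [LinearOrder V]

theorem simplexDelta_assocCochain_of_forall_card_inter_eq_one [Fintype V]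
    (hA : IsPartition A) (hord : OrderAdapted A) {τ : Finset V} (h : ∀ i, #(τ ∩ A i) = 1) :
    simplexDelta (assocCochain A) τ = Fintype.card V := by
  have hterm : ∀ v ∈ τ,
      (-1) ^ #(τ.filter (· < v)) * assocCochain A (τ.erase v) = #(A (hA.part v)) := by
    intro v hv
    have hmissing : ∀ l, τ.erase v ∩ A l = ∅ ↔ l = hA.part v := fun l => by
      rw [hA.erase_inter_eq_empty_iff hv]
      simp [← card_eq_zero, h l]
    rw [assocCochain_eq_of_forall_inter_eq_empty_iff hmissing, hA.card_filter_lt_eq_part hord h hv,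
      ← mul_assoc, ← pow_add, Even.neg_one_pow ⟨_, rfl⟩, one_mul]
  have hcard : ∑ l, #(A l) = Fintype.card V := by
    simpa using hA.sum_card_inter univ
  rw [simplexDelta, sum_congr rfl hterm, hA.sum_comp_part τ fun l => (#(A l) : ℝ)]
  simp only [h, one_smul]
  exact_mod_cast hcard

theorem simplexDelta_assocCochain_of_two_missing {τ : Finset V} {i j : Fin (k + 1)} (hij : i ≠ j)
    (hi : τ ∩ A i = ∅) (hj : τ ∩ A j = ∅) : simplexDelta (assocCochain A) τ = 0 := by
  refine sum_eq_zero fun v _ => ?_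
  rw [assocCochain_eq_zero_of_inter_eq_empty hij (by rw [erase_inter, hi, erase_empty])
    (by rw [erase_inter, hj, erase_empty]), mul_zero]

theorem simplexDelta_assocCochain_of_missing_doubled (hA : IsPartition A) (hord : OrderAdapted A)
    {τ : Finset V} {i p : Fin (k + 1)} {u u' : V} (hu : u < u') (hi : τ ∩ A i = ∅)
    (hp : τ ∩ A p = {u, u'}) (hrest : ∀ l, l ≠ i → l ≠ p → #(τ ∩ A l) = 1) :
    simplexDelta (assocCochain A) τ = 0 := by
  have huτ : u ∈ τ ∩ A p := hp ▸ mem_insert_self u {u'}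
  have hu'τ : u' ∈ τ ∩ A p := hp ▸ mem_insert_of_mem (mem_singleton_self u')
  have hempty : ∀ l, τ ∩ A l = ∅ ↔ l = i := by
    refine fun l => ⟨fun hl => ?_, fun hl => hl ▸ hi⟩
    by_contra hli
    by_cases hlp : l = p
    · exact notMem_empty u (hl ▸ hlp ▸ huτ)
    · simpa [hl] using hrest l hli hlp
  have hmissing : ∀ w ∈ τ ∩ A p, ∀ l, τ.erase w ∩ A l = ∅ ↔ l = i := by
    intro w hw l
    rw [hA.erase_inter_eq_empty_iff (mem_inter.1 hw).1, hempty, hA.part_eq_of_mem (mem_inter.1 hw).2,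
      or_iff_left]
    rintro ⟨rfl, hcard⟩
    rw [hp, card_pair hu.ne] at hcard
    omega
  have hzero : ∀ v ∈ τ, v ≠ u ∧ v ≠ u' →
      (-1) ^ #(τ.filter (· < v)) * assocCochain A (τ.erase v) = 0 := by
    rintro v hv ⟨hvu, hvu'⟩
    have hvp : hA.part v ≠ p := fun h => by
      have : v ∈ τ ∩ A p := mem_inter.2 ⟨hv, h ▸ hA.mem_part v⟩
      rw [hp, mem_insert, mem_singleton] at this
      exact this.elim hvu hvu'
    have hvi : hA.part v ≠ i := fun h => by
      have := mem_inter.2 ⟨hv, hA.mem_part v⟩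
      rw [h, hi] at this
      exact notMem_empty v this
    rw [assocCochain_eq_zero_of_inter_eq_empty hvi
      ((hA.erase_inter_eq_empty_iff hv _).2 (Or.inr ⟨rfl, hrest _ hvi hvp⟩))
      ((hA.erase_inter_eq_empty_iff hv _).2 (Or.inl hi)), mul_zero]
  rw [simplexDelta, sum_eq_add u u' hu.ne hzero (absurd (mem_inter.1 huτ).1)
    (absurd (mem_inter.1 hu'τ).1), assocCochain_eq_of_forall_inter_eq_empty_iff (hmissing u huτ),
    assocCochain_eq_of_forall_inter_eq_empty_iff (hmissing u' hu'τ),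
    hA.card_filter_lt_eq_succ_of_inter_eq_pair hord hu hp, pow_succ]
  ring

end AssocCochain

theorem delta_assocCochain_eq_general
    {V : Type*} [DecidableEq V] [Fintype V] [LinearOrder V]
    (X : Finset (Finset V)) (k : ℕ)
    (hX : IsComplex X)
    (A : Fin (k + 1) → Finset V) (hA : IsPartition A) (hord : OrderAdapted A) :
    ∀ τ ∈ faces X (k + 1),
      delta X k (assocCochain A) τ
        = if τ ∈ Fset X k A then (Fintype.card V : ℝ) else 0 := by
  intro τ hτ
  have hmem : τ ∈ Fset X k A ↔ ∀ i, #(τ ∩ A i) = 1 := by rw [Fset, mem_filter, and_iff_right hτ]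
  rw [delta_eq_simplexDelta hX hτ]
  by_cases hrainbow : ∀ i, #(τ ∩ A i) = 1
  · rw [if_pos (hmem.2 hrainbow)]
    exact simplexDelta_assocCochain_of_forall_card_inter_eq_one hA hord hrainbow
  rw [if_neg (mt hmem.1 hrainbow)]
  rcases hA.exists_two_missing_or_missing_doubled (mem_filter.1 hτ).2 hrainbow with
    ⟨i, j, hij, hi, hj⟩ | ⟨i, p, u, u', hu, hi, hp, hrest⟩
  · exact simplexDelta_assocCochain_of_two_missing hij hi hj
  · exact simplexDelta_assocCochain_of_missing_doubled hA hord hu hi hp hrest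

/-- Pointwise form of Lemma 1.6: for every `k`-face `τ` of `X`, the coboundary of the
associated cochain satisfies `(δ_{k-1} f)(τ) = |V|` if `τ ∈ F(A_0,…,A_k)` and `= 0`
otherwise. -/
theorem delta_assocCochain_eq
    {V : Type*} [DecidableEq V] [Fintype V] [LinearOrder V]
    (X : Finset (Finset V)) (k : ℕ)
    (hX : IsComplex X) (hdim : IsDim X k)
    (A : Fin (k + 1) → Finset V) (hA : IsPartition A) (hord : OrderAdapted A) :
    ∀ τ ∈ faces X (k + 1),
      delta X k (assocCochain A) τ
        = if τ ∈ Fset X k A then (Fintype.card V : ℝ) else 0 :=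
  delta_assocCochain_eq_general X k hX A hA hord

end HigherCheeger
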